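/- arXiv:2510.06642 — 6 statements merged into one kernel-verified Lean document; each statement's English description precedes it below -/
import Mathlib

section
/- For any z ∈ ℝⁿ with μᵀz = c, the point z minimizes (1/2)‖z - x‖² + λ‖z‖₁ over the affine set {z : μᵀz = c} if and only if there exists w ∈ ℝ such that z = Prox_{λ‖·‖₁}(x - wμ) and μᵀz = c. -/
open Finset

/-- Scalar soft-thresholding: `Prox_{λ|·|}(t) = sign(t)·(|t|-λ)₊`. -/
noncomputable def st (lam t : ℝ) : ℝ := Real.sign t * max (|t| - lam) 0

lemma st_of_abs_le {lam t : ℝ} (h : |t| ≤ lam) : st lam t = 0 := by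
  unfold st; rw [max_eq_right (by linarith), mul_zero]

lemma st_of_gt {lam t : ℝ} (hl : 0 ≤ lam) (h : lam < t) : st lam t = t - lam := by
  have ht : 0 < t := lt_of_le_of_lt hl h
  unfold st
  rw [Real.sign_of_pos ht, abs_of_pos ht, max_eq_left (by linarith), one_mul]

lemma st_of_lt {lam t : ℝ} (hl : 0 ≤ lam) (h : t < -lam) : st lam t = t + lam := by
  have ht : t < 0 := by linarith
  unfold st
  rw [Real.sign_of_neg ht, abs_of_neg ht, max_eq_left (by linarith)]
  ring

lemma st_eq_max_min {lam : ℝ} (hl : 0 ≤ lam) (t : ℝ) :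
    st lam t = max (t - lam) 0 + min (t + lam) 0 := by
  rcases le_or_gt (|t|) lam with h | h
  · obtain ⟨h1, h2⟩ := abs_le.mp h
    rw [st_of_abs_le h, max_eq_right (by linarith), min_eq_right (by linarith)]
    ring
  · rcases lt_abs.mp h with h' | h'
    · rw [st_of_gt hl h', max_eq_left (by linarith), min_eq_right (by linarith)]; ring
    · rw [st_of_lt hl (by linarith), max_eq_right (by linarith), min_eq_left (by linarith)]; ring

lemma st_bounds {lam : ℝ} (hl : 0 ≤ lam) (t : ℝ) :
    t - lam ≤ st lam t ∧ st lam t ≤ t + lam := by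
  rcases le_or_gt (|t|) lam with h | h
  · obtain ⟨h1, h2⟩ := abs_le.mp h
    rw [st_of_abs_le h]; constructor <;> linarith
  · rcases lt_abs.mp h with h' | h'
    · rw [st_of_gt hl h']; constructor <;> linarith
    · rw [st_of_lt hl (by linarith)]; constructor <;> linarith

lemma st_prox {lam : ℝ} (hl : 0 ≤ lam) (v t : ℝ) :
    (1/2)*(st lam v - v)^2 + lam * |st lam v| ≤ (1/2)*(t - v)^2 + lam * |t| := by
  rcases le_or_gt (|v|) lam with h | h
  · rw [st_of_abs_le h, abs_zero]
    nlinarith [le_abs_self (t*v), abs_mul t v, abs_nonneg t, abs_nonneg v,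
      mul_le_mul_of_nonneg_left h (abs_nonneg t), sq_nonneg t]
  · rcases lt_abs.mp h with h' | h'
    · rw [st_of_gt hl h', abs_of_nonneg (by linarith)]
      nlinarith [sq_nonneg (t - v + lam), le_abs_self t]
    · rw [st_of_lt hl (by linarith), abs_of_nonpos (by linarith)]
      nlinarith [sq_nonneg (t - v - lam), neg_abs_le t]

lemma st_continuous {lam : ℝ} (hl : 0 ≤ lam) : Continuous (st lam) := by
  have h : st lam = fun t => max (t - lam) 0 + min (t + lam) 0 :=
    funext (st_eq_max_min hl)
  rw [h]
  exact ((continuous_id.sub continuous_const).max continuous_const).add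
    ((continuous_id.add continuous_const).min continuous_const)

lemma min_of_st {n : ℕ} (μ x : Fin n → ℝ) (lam : ℝ) (hl : 0 ≤ lam) (c w : ℝ)
    (z : Fin n → ℝ) (hw : ∀ i, z i = st lam (x i - w * μ i))
    (hz : ∑ i, μ i * z i = c) :
    ∀ z' : Fin n → ℝ, ∑ i, μ i * z' i = c →
      (1/2) * ∑ i, (z i - x i)^2 + lam * ∑ i, |z i| ≤
        (1/2) * ∑ i, (z' i - x i)^2 + lam * ∑ i, |z' i| := by
  intro z' hz'
  have h1 : ∀ i : Fin n,
      (1/2)*(z i - x i)^2 + lam*|z i| + w*(μ i * z i) ≤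
      (1/2)*(z' i - x i)^2 + lam*|z' i| + w*(μ i * z' i) := by
    intro i
    have h := st_prox hl (x i - w * μ i) (z' i)
    rw [← hw i] at h
    nlinarith [h]
  have hsum := Finset.sum_le_sum (s := Finset.univ) (fun i _ => h1 i)
  have e1 : ∀ u : Fin n → ℝ,
      ∑ i, ((1/2)*(u i - x i)^2 + lam*|u i| + w*(μ i * u i)) =
      (1/2)*∑ i, (u i - x i)^2 + lam*∑ i, |u i| + w*∑ i, μ i * u i := by
    intro u
    rw [Finset.sum_add_distrib, Finset.sum_add_distrib, ← Finset.mul_sum,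
      ← Finset.mul_sum, ← Finset.mul_sum]
  rw [e1 z, e1 z', hz, hz'] at hsum
  linarith

set_option maxHeartbeats 1600000 in
/-- `z` with `μᵀz = c` minimizes `(1/2)‖z-x‖² + λ‖z‖₁` over `{z : μᵀz = c}` iff there is
`w ∈ ℝ` with `z = Prox_{λ‖·‖₁}(x - wμ)` (componentwise soft-thresholding) and `μᵀz = c`. -/
theorem stmt1 (n : ℕ) (μ x z : Fin n → ℝ) (hμ : μ ≠ 0) (lam : ℝ) (hlam : 0 < lam)
    (c : ℝ) (hz : ∑ i, μ i * z i = c) :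
    (∀ z' : Fin n → ℝ, ∑ i, μ i * z' i = c →
        (1/2) * ∑ i, (z i - x i)^2 + lam * ∑ i, |z i| ≤
          (1/2) * ∑ i, (z' i - x i)^2 + lam * ∑ i, |z' i|)
    ↔ ∃ w : ℝ, (∀ i, z i = st lam (x i - w * μ i)) ∧ ∑ i, μ i * z i = c := by
  have hl : (0:ℝ) ≤ lam := hlam.le
  constructor
  · intro hmin
    -- set up the continuous function g(w) = μᵀ Prox(x - wμ) and find w with g w = c by IVT
    set g : ℝ → ℝ := fun w => ∑ i, μ i * st lam (x i - w * μ i) with hg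
    have hgc : Continuous g := by
      apply continuous_finset_sum
      intro i _
      exact continuous_const.mul ((st_continuous hl).comp (by fun_prop))
    set S := ∑ i, (μ i)^2 with hSdef
    set A := ∑ i, μ i * x i with hAdef
    set B := lam * ∑ i, |μ i| with hBdef
    have hB : 0 ≤ B := mul_nonneg hl (Finset.sum_nonneg fun i _ => abs_nonneg _)
    have hS : 0 < S := by
      obtain ⟨j, hj⟩ := Function.ne_iff.mp hμ
      have hj' : μ j ≠ 0 := by simpa using hj
      exact Finset.sum_pos' (fun i _ => sq_nonneg _)
        ⟨j, Finset.mem_univ j, by positivity⟩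
    have key : ∀ (i : Fin n) (w : ℝ),
        |μ i * st lam (x i - w * μ i) - μ i * (x i - w * μ i)| ≤ lam * |μ i| := by
      intro i w
      rw [← mul_sub, abs_mul, mul_comm]
      have hb := st_bounds hl (x i - w * μ i)
      exact mul_le_mul_of_nonneg_right
        (abs_le.mpr ⟨by linarith [hb.1], by linarith [hb.2]⟩) (abs_nonneg _)
    have habs : ∀ w : ℝ, |g w - (A - w * S)| ≤ B := by
      intro w
      have e : ∑ i, μ i * (x i - w * μ i) = A - w * S := by
        rw [Finset.sum_congr rfl
          (fun i _ => (by ring : μ i * (x i - w * μ i) = μ i * x i - w * (μ i)^2)),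
          Finset.sum_sub_distrib, ← Finset.mul_sum]
      calc |g w - (A - w * S)|
          = |∑ i, (μ i * st lam (x i - w * μ i) - μ i * (x i - w * μ i))| := by
            rw [Finset.sum_sub_distrib, e]
        _ ≤ ∑ i, |μ i * st lam (x i - w * μ i) - μ i * (x i - w * μ i)| :=
            Finset.abs_sum_le_sum_abs _ _
        _ ≤ ∑ i, lam * |μ i| := Finset.sum_le_sum fun i _ => key i w
        _ = B := by rw [hBdef, Finset.mul_sum]
    set w1 := (A - c - B) / S with hw1def
    set w2 := (A - c + B) / S with hw2def
    have hw1S : w1 * S = A - c - B := div_mul_cancel₀ _ hS.ne'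
    have hw2S : w2 * S = A - c + B := div_mul_cancel₀ _ hS.ne'
    have hcw1 : c ≤ g w1 := by
      have h := (abs_le.mp (habs w1)).1
      nlinarith [hw1S]
    have hcw2 : g w2 ≤ c := by
      have h := (abs_le.mp (habs w2)).2
      nlinarith [hw2S]
    have hw12 : w1 ≤ w2 := by
      rw [hw1def, hw2def]
      apply div_le_div_of_nonneg_right _ hS.le
      linarith
    obtain ⟨w, _, hwc⟩ := intermediate_value_Icc' hw12 hgc.continuousOn
      (Set.mem_Icc.mpr ⟨hcw2, hcw1⟩)
    -- define the candidate minimizer and use uniqueness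
    set z2 : Fin n → ℝ := fun i => st lam (x i - w * μ i) with hz2def
    have hc2 : ∑ i, μ i * z2 i = c := hwc
    have hmin2 := min_of_st μ x lam hl c w z2 (fun i => rfl) hc2
    set m : Fin n → ℝ := fun i => (z i + z2 i) / 2 with hmdef
    have hmc : ∑ i, μ i * m i = c := by
      rw [Finset.sum_congr rfl
        (fun i _ => (by rw [hmdef]; ring :
          μ i * m i = (μ i * z i) / 2 + (μ i * z2 i) / 2)),
        Finset.sum_add_distrib, ← Finset.sum_div, ← Finset.sum_div, hz, hc2]
      ring
    have hfm := hmin m hmc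
    have hfz := hmin2 z hz
    have hcomp : ∀ i : Fin n,
        (1/2)*(m i - x i)^2 + lam*|m i| + (1/8)*(z i - z2 i)^2 ≤
        (1/4)*(z i - x i)^2 + (lam/2)*|z i| + (1/4)*(z2 i - x i)^2 + (lam/2)*|z2 i| := by
      intro i
      have hm : m i = (z i + z2 i) / 2 := rfl
      have habs2 : |m i| ≤ (|z i| + |z2 i|) / 2 := by
        rw [hm]
        calc |(z i + z2 i)/2| = |z i + z2 i| / 2 := by
              rw [abs_div]; norm_num
          _ ≤ (|z i| + |z2 i|) / 2 := by linarith [abs_add_le (z i) (z2 i)]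
      rw [hm]
      nlinarith [mul_le_mul_of_nonneg_left habs2 hl]
    have hsum2 := Finset.sum_le_sum (s := Finset.univ) (fun i _ => hcomp i)
    have eL : ∑ i, ((1/2)*(m i - x i)^2 + lam*|m i| + (1/8)*(z i - z2 i)^2) =
        (1/2)*∑ i, (m i - x i)^2 + lam*∑ i, |m i| + (1/8)*∑ i, (z i - z2 i)^2 := by
      rw [Finset.sum_add_distrib, Finset.sum_add_distrib, ← Finset.mul_sum,
        ← Finset.mul_sum, ← Finset.mul_sum]
    have eR : ∑ i, ((1/4)*(z i - x i)^2 + (lam/2)*|z i| + (1/4)*(z2 i - x i)^2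
          + (lam/2)*|z2 i|) =
        (1/4)*∑ i, (z i - x i)^2 + (lam/2)*∑ i, |z i| + (1/4)*∑ i, (z2 i - x i)^2
          + (lam/2)*∑ i, |z2 i| := by
      rw [Finset.sum_add_distrib, Finset.sum_add_distrib, Finset.sum_add_distrib,
        ← Finset.mul_sum, ← Finset.mul_sum, ← Finset.mul_sum, ← Finset.mul_sum]
    rw [eL, eR] at hsum2
    have hd0 : ∑ i, (z i - z2 i)^2 ≤ 0 := by linarith
    have hd : ∑ i, (z i - z2 i)^2 = 0 :=
      le_antisymm hd0 (Finset.sum_nonneg fun i _ => sq_nonneg _)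
    have hzero := (Finset.sum_eq_zero_iff_of_nonneg
      (fun i _ => sq_nonneg (z i - z2 i))).mp hd
    refine ⟨w, fun i => ?_, hz⟩
    have h0 := hzero i (Finset.mem_univ i)
    have : z i - z2 i = 0 := by
      nlinarith [sq_nonneg (z i - z2 i), h0]
    have : z i = z2 i := by linarith
    rw [this]
  · rintro ⟨w, hw, hc⟩
    exact min_of_st μ x lam hl c w z hw hz
end

section
/- If f(x,w) = c for two values w₁ < w₂, then for every i, both w₁μᵢ and w₂μᵢ lie in the interval [xᵢ - λ, xᵢ + λ], and consequently f(x,w₁) = 0. -/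
open Finset

lemma st_alt (lam : ℝ) (hlam : 0 ≤ lam) (t : ℝ) :
    st lam t = max (t - lam) 0 + min (t + lam) 0 := by
  unfold st
  rcases lt_trichotomy t 0 with h | h | h
  · rw [Real.sign_of_neg h, abs_of_neg h]
    rcases le_total (t + lam) 0 with h2 | h2
    · rw [max_eq_left (by linarith), max_eq_right (by linarith), min_eq_left h2]; ring
    · rw [max_eq_right (by linarith), max_eq_right (by linarith), min_eq_right h2]; ring
  · subst h
    rw [Real.sign_zero, abs_zero, zero_mul, zero_sub, zero_add,
      max_eq_right (by linarith), min_eq_right hlam]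
    ring
  · rw [Real.sign_of_pos h, abs_of_pos h, min_eq_right (by linarith)]
    ring

lemma st_mono (lam : ℝ) (hlam : 0 ≤ lam) : Monotone (st lam) := by
  intro a b hab
  rw [st_alt lam hlam, st_alt lam hlam]
  exact add_le_add (max_le_max (by linarith) le_rfl) (min_le_min (by linarith) le_rfl)

lemma st_eq_zero_iff (lam : ℝ) (hlam : 0 ≤ lam) (t : ℝ) :
    st lam t = 0 ↔ -lam ≤ t ∧ t ≤ lam := by
  rw [st_alt lam hlam]
  constructor
  · intro h
    by_cases h1 : t ≤ lam
    · constructor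
      · by_contra hc
        push_neg at hc
        rw [max_eq_right (by linarith), min_eq_left (by linarith)] at h
        linarith
      · exact h1
    · push_neg at h1
      rw [max_eq_left (by linarith), min_eq_right (by linarith)] at h
      constructor <;> linarith
  · rintro ⟨h1, h2⟩
    rw [max_eq_right (by linarith), min_eq_right (by linarith)]
    ring

lemma st_of_pos (lam : ℝ) (hlam : 0 ≤ lam) {t : ℝ} (h : 0 < st lam t) :
    st lam t = t - lam ∧ lam < t := by
  rw [st_alt lam hlam] at h ⊢
  have hmin := min_le_right (t + lam) (0 : ℝ)
  have hmax : 0 < max (t - lam) 0 := by linarith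
  have ht : lam < t := by
    by_contra hc; push_neg at hc
    rw [max_eq_right (by linarith)] at hmax; linarith
  rw [max_eq_left (by linarith), min_eq_right (by linarith)]
  exact ⟨by ring, ht⟩

lemma st_of_neg (lam : ℝ) (hlam : 0 ≤ lam) {t : ℝ} (h : st lam t < 0) :
    st lam t = t + lam ∧ t < -lam := by
  rw [st_alt lam hlam] at h ⊢
  have hmax := le_max_right (t - lam) (0 : ℝ)
  have hmin : min (t + lam) 0 < 0 := by linarith
  have ht : t < -lam := by
    by_contra hc; push_neg at hc
    rw [min_eq_right (by linarith)] at hmin; linarith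
  rw [max_eq_right (by linarith), min_eq_left (by linarith)]
  exact ⟨by ring, ht⟩

lemma st_eq_of_ne (lam : ℝ) (hlam : 0 ≤ lam) {a b : ℝ} (hab : a < b)
    (h : st lam a = st lam b) : st lam a = 0 ∧ st lam b = 0 := by
  rcases lt_trichotomy (st lam b) 0 with hb | hb | hb
  · obtain ⟨hb1, hb2⟩ := st_of_neg lam hlam hb
    obtain ⟨ha1, ha2⟩ := st_of_neg lam hlam (h ▸ hb)
    rw [ha1, hb1] at h; linarith
  · exact ⟨h ▸ hb, hb⟩
  · obtain ⟨hb1, hb2⟩ := st_of_pos lam hlam hb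
    obtain ⟨ha1, ha2⟩ := st_of_pos lam hlam (h ▸ hb)
    rw [ha1, hb1] at h; linarith

/-- If `f(x,w₁) = f(x,w₂) = c` with `w₁ < w₂`, then every `w₁μᵢ` and `w₂μᵢ` lies in
`[xᵢ - λ, xᵢ + λ]`, and consequently `f(x,w₁) = 0`. -/
theorem stmt4 (n : ℕ) (μ : Fin n → ℝ) (hμ : ∀ i, μ i ≠ 0)
    (lam : ℝ) (hlam : 0 < lam) (x : Fin n → ℝ) (c w₁ w₂ : ℝ) (hlt : w₁ < w₂)
    (h1 : ∑ i, μ i * st lam (x i - w₁ * μ i) = c)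
    (h2 : ∑ i, μ i * st lam (x i - w₂ * μ i) = c) :
    (∀ i, w₁ * μ i ∈ Set.Icc (x i - lam) (x i + lam) ∧
          w₂ * μ i ∈ Set.Icc (x i - lam) (x i + lam)) ∧
    ∑ i, μ i * st lam (x i - w₁ * μ i) = 0 := by
  have hmono := st_mono lam hlam.le
  -- each term at w₂ is ≤ term at w₁
  have hterm : ∀ i : Fin n, μ i * st lam (x i - w₂ * μ i) ≤ μ i * st lam (x i - w₁ * μ i) := by
    intro i
    rcases (hμ i).lt_or_gt with hneg | hpos
    · have : st lam (x i - w₁ * μ i) ≤ st lam (x i - w₂ * μ i) :=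
        hmono (by nlinarith)
      exact mul_le_mul_of_nonpos_left this hneg.le
    · have : st lam (x i - w₂ * μ i) ≤ st lam (x i - w₁ * μ i) :=
        hmono (by nlinarith)
      exact mul_le_mul_of_nonneg_left this hpos.le
  have hsum : ∑ i, μ i * st lam (x i - w₂ * μ i) = ∑ i, μ i * st lam (x i - w₁ * μ i) := by
    rw [h1, h2]
  have heach : ∀ i : Fin n,
      μ i * st lam (x i - w₂ * μ i) = μ i * st lam (x i - w₁ * μ i) := by
    intro i
    exact (Finset.sum_eq_sum_iff_of_le (fun j _ => hterm j)).mp hsum i (Finset.mem_univ i)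
  have hst : ∀ i : Fin n, st lam (x i - w₁ * μ i) = 0 ∧ st lam (x i - w₂ * μ i) = 0 := by
    intro i
    have he : st lam (x i - w₂ * μ i) = st lam (x i - w₁ * μ i) :=
      mul_left_cancel₀ (hμ i) (heach i)
    rcases (hμ i).lt_or_gt with hneg | hpos
    · have hab : x i - w₁ * μ i < x i - w₂ * μ i := by nlinarith
      have := st_eq_of_ne lam hlam.le hab he.symm
      exact ⟨this.1, this.2⟩
    · have hab : x i - w₂ * μ i < x i - w₁ * μ i := by nlinarith
      have := st_eq_of_ne lam hlam.le hab he
      exact ⟨this.2, this.1⟩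
  constructor
  · intro i
    have h₁ := (st_eq_zero_iff lam hlam.le _).mp (hst i).1
    have h₂ := (st_eq_zero_iff lam hlam.le _).mp (hst i).2
    constructor
    · exact ⟨by linarith [h₁.2], by linarith [h₁.1]⟩
    · exact ⟨by linarith [h₂.2], by linarith [h₂.1]⟩
  · apply Finset.sum_eq_zero
    intro i _
    rw [(hst i).1, mul_zero]
end

section
/- Suppose c ≠ 0. For any x ∈ ℝⁿ, the index set α(x) := {i : |xᵢ - w(x)μᵢ| > λ} is nonempty, and the dual multiplier satisfies the closed-form expression w(x) = (Σ_{i∈α(x)} μᵢxᵢ - λ(Σ_{i∈α₊(x)} μᵢ - Σ_{i∈α₋(x)} μᵢ) - c) / Σ_{i∈α(x)} μᵢ². -/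
open Finset

lemma st_eq (lam t : ℝ) (hlam : 0 < lam) :
    st lam t = (if lam < t then t - lam else 0) + (if t < -lam then t + lam else 0) := by
  unfold st
  rcases lt_or_ge lam t with h | h
  · have ht : 0 < t := hlam.trans h
    rw [Real.sign_of_pos ht, abs_of_pos ht, if_pos h, if_neg (by linarith)]
    rw [max_eq_left (by linarith)]; ring
  · rcases lt_or_ge t (-lam) with h2 | h2
    · have ht : t < 0 := by linarith
      rw [Real.sign_of_neg ht, abs_of_neg ht, if_neg (not_lt.2 h), if_pos h2]
      rw [max_eq_left (by linarith)]; ring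
    · rw [if_neg (not_lt.2 h), if_neg (not_lt.2 h2), max_eq_right (by
        rw [sub_nonpos, abs_le]; constructor <;> linarith)]
      ring

/-- With `c ≠ 0`, the index set `α(x) = {i : |xᵢ - w(x)μᵢ| > λ}` is nonempty and the dual
multiplier satisfies the stated closed-form expression. -/
theorem stmt6 (n : ℕ) (μ : Fin n → ℝ) (hμ : ∀ i, μ i ≠ 0)
    (lam : ℝ) (hlam : 0 < lam) (c : ℝ) (hc : c ≠ 0)
    (w : (Fin n → ℝ) → ℝ)
    (hw : ∀ y : Fin n → ℝ, ∑ i, μ i * st lam (y i - w y * μ i) = c)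
    (x : Fin n → ℝ) :
    (Finset.univ.filter (fun i => lam < |x i - w x * μ i|)).Nonempty ∧
    w x = ((∑ i ∈ Finset.univ.filter (fun i => lam < |x i - w x * μ i|), μ i * x i)
            - lam * ((∑ i ∈ Finset.univ.filter (fun i => lam < x i - w x * μ i), μ i)
                      - ∑ i ∈ Finset.univ.filter (fun i => x i - w x * μ i < -lam), μ i)
            - c)
          / ∑ i ∈ Finset.univ.filter (fun i => lam < |x i - w x * μ i|), μ i ^ 2 := by
  classical
  set t : Fin n → ℝ := fun i => x i - w x * μ i with ht
  set S := Finset.univ.filter (fun i => lam < |t i|) with hS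
  set Sp := Finset.univ.filter (fun i => lam < t i) with hSp
  set Sm := Finset.univ.filter (fun i => t i < -lam) with hSm
  have hkey : ∑ i, μ i * st lam (t i) = c := hw x
  have hsplit : ∀ i, μ i * st lam (t i) =
      (if lam < t i then μ i * (t i - lam) else 0) +
      (if t i < -lam then μ i * (t i + lam) else 0) := by
    intro i
    rw [st_eq lam (t i) hlam]
    by_cases h1 : lam < t i <;> by_cases h2 : t i < -lam <;> simp [h1, h2] <;> ring
  have hsum : (∑ i ∈ Sp, μ i * (t i - lam)) + ∑ i ∈ Sm, μ i * (t i + lam) = c := by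
    rw [← hkey]
    simp only [hsplit]
    rw [Finset.sum_add_distrib, Finset.sum_filter, Finset.sum_filter]
  -- S = Sp ∪ Sm, disjoint
  have hSunion : S = Sp ∪ Sm := by
    ext i
    simp only [hS, hSp, hSm, Finset.mem_union, Finset.mem_filter, Finset.mem_univ, true_and]
    rw [lt_abs]
    constructor <;> rintro (h | h)
    · exact Or.inl h
    · exact Or.inr (by linarith)
    · exact Or.inl h
    · exact Or.inr (by linarith)
  have hdisj : Disjoint Sp Sm := by
    rw [Finset.disjoint_filter]
    intro i _ h1 h2
    linarith
  have hSsum : ∀ (f : Fin n → ℝ), ∑ i ∈ S, f i = (∑ i ∈ Sp, f i) + ∑ i ∈ Sm, f i := by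
    intro f; rw [hSunion, Finset.sum_union hdisj]
  have hmain : (∑ i ∈ S, μ i * x i) - w x * ∑ i ∈ S, μ i ^ 2
      - lam * ((∑ i ∈ Sp, μ i) - ∑ i ∈ Sm, μ i) = c := by
    have h1 : ∑ i ∈ S, μ i * t i = (∑ i ∈ S, μ i * x i) - w x * ∑ i ∈ S, μ i ^ 2 := by
      rw [Finset.mul_sum, ← Finset.sum_sub_distrib]
      apply Finset.sum_congr rfl
      intro i _; simp only [ht]; ring
    have h2 : ∑ i ∈ S, μ i * t i = (∑ i ∈ Sp, μ i * t i) + ∑ i ∈ Sm, μ i * t i :=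
      hSsum _
    have h3 : (∑ i ∈ Sp, μ i * (t i - lam)) = (∑ i ∈ Sp, μ i * t i) - lam * ∑ i ∈ Sp, μ i := by
      rw [Finset.mul_sum, ← Finset.sum_sub_distrib]
      apply Finset.sum_congr rfl; intro i _; ring
    have h4 : (∑ i ∈ Sm, μ i * (t i + lam)) = (∑ i ∈ Sm, μ i * t i) + lam * ∑ i ∈ Sm, μ i := by
      rw [Finset.mul_sum, ← Finset.sum_add_distrib]
      apply Finset.sum_congr rfl; intro i _; ring
    rw [← h1, h2]; linarith [hsum, h3, h4]
  have hne : S.Nonempty := by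
    by_contra hemp
    rw [Finset.not_nonempty_iff_eq_empty] at hemp
    have hpE : Sp = ∅ := by
      rw [← Finset.subset_empty, ← hemp, hSunion]; exact Finset.subset_union_left
    have hmE : Sm = ∅ := by
      rw [← Finset.subset_empty, ← hemp, hSunion]; exact Finset.subset_union_right
    rw [hemp, hpE, hmE] at hmain
    simp at hmain
    exact hc hmain.symm
  have hpos : 0 < ∑ i ∈ S, μ i ^ 2 := by
    apply Finset.sum_pos
    · intro i _; have := hμ i; positivity
    · exact hne
  refine ⟨hne, ?_⟩
  field_simp
  linarith [hmain]
end

section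
/- Suppose c = 0 and define E_L(x) = maxᵢ (xᵢ/μᵢ - λ/|μᵢ|) and E_R(x) = minᵢ (xᵢ/μᵢ + λ/|μᵢ|). If E_L(x) ≤ E_R(x), then Prox_{λq}(x) = 0, i.e., the zero vector is the unique minimizer of (1/2)‖z-x‖² + λ‖z‖₁ over {z : μᵀz = 0}. -/
open Finset

/-- With `c = 0`: if `E_L(x) ≤ E_R(x)`, then `0` is the unique minimizer of
`(1/2)‖z-x‖² + λ‖z‖₁` over `{z : μᵀz = 0}`. -/
theorem stmt13 (n : ℕ) (hn : 0 < n) (μ : Fin n → ℝ) (hμ : ∀ i, μ i ≠ 0)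
    (lam : ℝ) (hlam : 0 < lam) (x : Fin n → ℝ)
    (hE : (⨆ i, (x i / μ i - lam / |μ i|)) ≤ ⨅ i, (x i / μ i + lam / |μ i|)) :
    (∀ z : Fin n → ℝ, ∑ i, μ i * z i = 0 →
        (1/2) * ∑ i, (x i)^2 ≤ (1/2) * ∑ i, (z i - x i)^2 + lam * ∑ i, |z i|) ∧
    (∀ z : Fin n → ℝ, ∑ i, μ i * z i = 0 → z ≠ 0 →
        (1/2) * ∑ i, (x i)^2 < (1/2) * ∑ i, (z i - x i)^2 + lam * ∑ i, |z i|) := by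
  haveI : Nonempty (Fin n) := ⟨⟨0, hn⟩⟩
  set w := ⨆ i, (x i / μ i - lam / |μ i|) with hw
  have hbound : ∀ i, |x i - w * μ i| ≤ lam := by
    intro i
    have hμi : (0:ℝ) < |μ i| := abs_pos.mpr (hμ i)
    have h1 : x i / μ i - lam / |μ i| ≤ w := by
      rw [hw]
      exact le_ciSup (f := fun i => x i / μ i - lam / |μ i|)
        (Set.Finite.bddAbove (Set.finite_range _)) i
    have h2 : w ≤ x i / μ i + lam / |μ i| :=
      le_trans hE (ciInf_le (f := fun i => x i / μ i + lam / |μ i|)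
        (Set.Finite.bddBelow (Set.finite_range _)) i)
    have h3 : |x i / μ i - w| ≤ lam / |μ i| :=
      abs_le.mpr ⟨by linarith, by linarith⟩
    have h4 : x i - w * μ i = μ i * (x i / μ i - w) := by
      rw [mul_sub, mul_div_cancel₀ _ (hμ i)]; ring
    rw [h4, abs_mul]
    calc |μ i| * |x i / μ i - w| ≤ |μ i| * (lam / |μ i|) :=
          mul_le_mul_of_nonneg_left h3 hμi.le
      _ = lam := by field_simp
  have key : ∀ z : Fin n → ℝ, ∑ i, μ i * z i = 0 →
      (1/2) * ∑ i, (x i)^2 + (1/2) * ∑ i, (z i)^2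
        ≤ (1/2) * ∑ i, (z i - x i)^2 + lam * ∑ i, |z i| := by
    intro z hz
    have hterm : ∀ i, 0 ≤ lam * |z i| - z i * (x i - w * μ i) := by
      intro i
      have h1 : z i * (x i - w * μ i) ≤ |z i| * lam :=
        calc z i * (x i - w * μ i) ≤ |z i * (x i - w * μ i)| := le_abs_self _
          _ = |z i| * |x i - w * μ i| := abs_mul _ _
          _ ≤ |z i| * lam := mul_le_mul_of_nonneg_left (hbound i) (abs_nonneg _)
      linarith
    have hrw : (1/2) * ∑ i, (z i - x i)^2 + lam * ∑ i, |z i|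
        - (1/2) * ∑ i, (x i)^2 - (1/2) * ∑ i, (z i)^2
        = ∑ i, (lam * |z i| - z i * (x i - w * μ i)) - w * ∑ i, (μ i * z i) := by
      simp only [Finset.mul_sum, ← Finset.sum_sub_distrib, ← Finset.sum_add_distrib]
      apply Finset.sum_congr rfl
      intro i _
      ring
    have hsum : 0 ≤ ∑ i, (lam * |z i| - z i * (x i - w * μ i)) :=
      Finset.sum_nonneg fun i _ => hterm i
    rw [hz, mul_zero, sub_zero] at hrw
    linarith
  constructor
  · intro z hz
    have := key z hz
    have h0 : 0 ≤ ∑ i, (z i)^2 := Finset.sum_nonneg fun i _ => sq_nonneg _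
    linarith
  · intro z hz hz0
    have := key z hz
    obtain ⟨j, hj⟩ := Function.ne_iff.mp hz0
    have h0 : 0 < ∑ i, (z i)^2 :=
      Finset.sum_pos' (fun i _ => sq_nonneg _)
        ⟨j, Finset.mem_univ j, pow_pos (abs_pos.mpr hj) 2 |>.trans_eq (by rw [sq_abs])⟩
    linarith
end

section
/- Suppose c = 0. If E_L(x) > E_R(x), where E_L(x) = maxᵢ (xᵢ/μᵢ - λ/|μᵢ|) and E_R(x) = minᵢ (xᵢ/μᵢ + λ/|μᵢ|), then there exists a unique w ∈ ℝ with Σᵢ μᵢ·sign(xᵢ - wμᵢ)·(|xᵢ - wμᵢ| - λ)₊ = 0. -/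
open Finset

noncomputable def hfun (lam t : ℝ) : ℝ := max (t - lam) 0 + min (t + lam) 0

lemma st_eq_hfun {lam : ℝ} (hl : 0 ≤ lam) (t : ℝ) : st lam t = hfun lam t := by
  unfold st hfun
  rcases lt_trichotomy t 0 with h | h | h
  · rw [Real.sign_of_neg h, abs_of_neg h]
    rcases le_or_gt (t + lam) 0 with h2 | h2
    · rw [max_eq_left (by linarith : (0:ℝ) ≤ -t - lam),
        max_eq_right (by linarith : t - lam ≤ (0:ℝ)), min_eq_left h2]; ring
    · rw [max_eq_right (by linarith : -t - lam ≤ (0:ℝ)),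
        max_eq_right (by linarith : t - lam ≤ (0:ℝ)), min_eq_right h2.le]; ring
  · simp [h, hl, abs_of_nonneg, max_eq_right (by linarith : t - lam ≤ (0:ℝ)),
      min_eq_right (by linarith : (0:ℝ) ≤ t + lam)]
  · rw [Real.sign_of_pos h, abs_of_pos h, one_mul,
      min_eq_right (by linarith : (0:ℝ) ≤ t + lam), add_zero]

lemma hfun_mono (lam : ℝ) : Monotone (hfun lam) := by
  intro s t hst
  unfold hfun
  gcongr

lemma hfun_flat {lam s t : ℝ} (hl : 0 < lam) (hst : s < t)
    (he : hfun lam s = hfun lam t) : -lam ≤ s ∧ t ≤ lam := by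
  constructor
  · by_contra h
    push_neg at h
    have hs : hfun lam s = s + lam := by
      unfold hfun
      rw [max_eq_right (by linarith), min_eq_left (by linarith), zero_add]
    have ht : s + lam < hfun lam t := by
      have h1 : s + lam < min (t + lam) 0 := lt_min (by linarith) (by linarith)
      have h2 : (0:ℝ) ≤ max (t - lam) 0 := le_max_right _ _
      unfold hfun; linarith
    rw [hs] at he; linarith
  · by_contra h
    push_neg at h
    have ht : hfun lam t = t - lam := by
      unfold hfun
      rw [max_eq_left (by linarith), min_eq_right (by linarith), add_zero]
    have hs : hfun lam s < t - lam := by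
      have h1 : max (s - lam) 0 < t - lam := max_lt (by linarith) (by linarith)
      have h2 : min (s + lam) 0 ≤ 0 := min_le_right _ _
      unfold hfun; linarith
    rw [ht] at he; linarith

lemma hfun_close {lam t : ℝ} (hl : 0 ≤ lam) : |hfun lam t - t| ≤ lam := by
  unfold hfun
  rw [abs_le]
  rcases le_or_gt t (-lam) with h | h
  · rw [max_eq_right (by linarith), min_eq_left (by linarith)]
    constructor <;> linarith
  · rcases le_or_gt lam t with h2 | h2
    · rw [max_eq_left (by linarith), min_eq_right (by linarith)]
      constructor <;> linarith
    · rw [max_eq_right (by linarith), min_eq_right (by linarith)]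
      constructor <;> linarith

lemma hfun_cont (lam : ℝ) : Continuous (hfun lam) := by
  unfold hfun
  fun_prop

/-- In interval iff abs bound -/
lemma in_interval {μi xi lam a : ℝ} (hμi : μi ≠ 0) (h : |xi - a * μi| ≤ lam) :
    xi / μi - lam / |μi| ≤ a ∧ a ≤ xi / μi + lam / |μi| := by
  have hab : (0:ℝ) < |μi| := abs_pos.mpr hμi
  have key : xi - a * μi = μi * (xi / μi - a) := by field_simp
  rw [key, abs_mul] at h
  have h2 : |xi / μi - a| ≤ lam / |μi| := by
    rw [le_div_iff₀ hab]; rw [abs_sub_comm] at h ⊢; linarith [mul_comm |μi| |xi / μi - a|]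
  rw [abs_le] at h2
  constructor <;> linarith [h2.1, h2.2]

/-- With `c = 0`: if `E_L(x) > E_R(x)`, then there exists a unique `w ∈ ℝ` with
`Σᵢ μᵢ·sign(xᵢ - wμᵢ)·(|xᵢ - wμᵢ| - λ)₊ = 0`. -/
theorem stmt14 (n : ℕ) (hn : 0 < n) (μ : Fin n → ℝ) (hμ : ∀ i, μ i ≠ 0)
    (lam : ℝ) (hlam : 0 < lam) (x : Fin n → ℝ)
    (hE : (⨅ i, (x i / μ i + lam / |μ i|)) < ⨆ i, (x i / μ i - lam / |μ i|)) :
    ∃! w : ℝ, ∑ i, μ i * st lam (x i - w * μ i) = 0 := by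
  haveI : Nonempty (Fin n) := ⟨⟨0, hn⟩⟩
  set G : ℝ → ℝ := fun w => ∑ i, μ i * hfun lam (x i - w * μ i) with hG
  have hFG : ∀ w, (∑ i, μ i * st lam (x i - w * μ i)) = G w := by
    intro w; apply Finset.sum_congr rfl; intro i _
    rw [st_eq_hfun hlam.le]
  -- indices i j with R_j < L_i
  obtain ⟨i, hi⟩ := exists_lt_of_lt_ciSup hE
  obtain ⟨j, hj⟩ := exists_lt_of_ciInf_lt hi
  -- G antitone termwise
  have term_anti : ∀ (k : Fin n) {a b : ℝ}, a ≤ b →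
      μ k * hfun lam (x k - b * μ k) ≤ μ k * hfun lam (x k - a * μ k) := by
    intro k a b hab
    rcases (hμ k).lt_or_gt with hk | hk
    · have : x k - a * μ k ≤ x k - b * μ k := by nlinarith
      have := hfun_mono lam this
      nlinarith
    · have : x k - b * μ k ≤ x k - a * μ k := by nlinarith
      have := hfun_mono lam this
      nlinarith
  -- flat term forces membership in the interval
  have term_flat : ∀ (k : Fin n) {a b : ℝ}, a < b →
      μ k * hfun lam (x k - b * μ k) = μ k * hfun lam (x k - a * μ k) →
      |x k - a * μ k| ≤ lam := by
    intro k a b hab he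
    have he' : hfun lam (x k - b * μ k) = hfun lam (x k - a * μ k) :=
      mul_left_cancel₀ (hμ k) he
    rcases (hμ k).lt_or_gt with hk | hk
    · have hlt : x k - a * μ k < x k - b * μ k := by nlinarith
      obtain ⟨h1, h2⟩ := hfun_flat hlam hlt he'.symm
      rw [abs_le]; constructor <;> nlinarith
    · have hlt : x k - b * μ k < x k - a * μ k := by nlinarith
      obtain ⟨h1, h2⟩ := hfun_flat hlam hlt he'
      rw [abs_le]; constructor <;> nlinarith
  -- G strictly antitone
  have hanti : StrictAnti G := by
    intro a b hab
    rw [hG]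
    apply Finset.sum_lt_sum
    · intro k _; exact term_anti k hab.le
    · by_contra h
      push_neg at h
      have hall : ∀ k : Fin n, |x k - a * μ k| ≤ lam := by
        intro k
        have h1 := term_anti k hab.le
        have h2 := h k (Finset.mem_univ k)
        exact term_flat k hab (le_antisymm h1 h2)
      have ha1 := (in_interval (hμ i) (hall i)).1
      have ha2 := (in_interval (hμ j) (hall j)).2
      linarith
  -- continuity
  have hcont : Continuous G := by
    apply continuous_finset_sum
    intro k _
    exact continuous_const.mul ((hfun_cont lam).comp (by fun_prop))
  -- existence via IVT
  set S := ∑ k, (μ k)^2 with hSdef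
  set T := ∑ k, |μ k| with hTdef
  set C := ∑ k, μ k * x k with hCdef
  have hS : 0 < S := by
    apply Finset.sum_pos
    · intro k _; have := hμ k; positivity
    · exact ⟨i, Finset.mem_univ i⟩
  have hT0 : 0 ≤ T := Finset.sum_nonneg fun k _ => abs_nonneg _
  have bound : ∀ (w : ℝ) (k : Fin n),
      |μ k * hfun lam (x k - w * μ k) - μ k * (x k - w * μ k)| ≤ lam * |μ k| := by
    intro w k
    rw [← mul_sub, abs_mul, mul_comm]
    exact mul_le_mul_of_nonneg_right (hfun_close hlam.le) (abs_nonneg _)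
  have lower : ∀ w : ℝ, C - w * S - lam * T ≤ G w := by
    intro w
    have : C - w * S - lam * T = ∑ k, (μ k * x k - w * (μ k)^2 - lam * |μ k|) := by
      rw [hCdef, hSdef, hTdef, Finset.mul_sum, Finset.mul_sum, ← Finset.sum_sub_distrib,
        ← Finset.sum_sub_distrib]
    rw [this, hG]
    apply Finset.sum_le_sum
    intro k _
    have hb := abs_le.mp (bound w k)
    nlinarith [hb.1]
  have upper : ∀ w : ℝ, G w ≤ C - w * S + lam * T := by
    intro w
    have : C - w * S + lam * T = ∑ k, (μ k * x k - w * (μ k)^2 + lam * |μ k|) := by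
      rw [hCdef, hSdef, hTdef, Finset.mul_sum, Finset.mul_sum, ← Finset.sum_sub_distrib,
        ← Finset.sum_add_distrib]
    rw [this, hG]
    apply Finset.sum_le_sum
    intro k _
    have hb := abs_le.mp (bound w k)
    nlinarith [hb.2]
  set A := (C - lam * T) / S with hA
  set B := (C + lam * T) / S with hB
  have hAS : A * S = C - lam * T := div_mul_cancel₀ _ hS.ne'
  have hBS : B * S = C + lam * T := div_mul_cancel₀ _ hS.ne'
  have hGA : 0 ≤ G A := by have := lower A; linarith
  have hGB : G B ≤ 0 := by have := upper B; linarith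
  have hAB : A ≤ B := by
    rw [hA, hB]
    gcongr
    nlinarith
  obtain ⟨w, _, hw⟩ := intermediate_value_Icc' hAB hcont.continuousOn ⟨hGB, hGA⟩
  refine ⟨w, ?_, ?_⟩
  · exact (hFG w).trans hw
  · intro y hy
    exact hanti.injective (((hFG y).symm.trans hy).trans hw.symm)
end

section
/- If E_L(x) < E_R(x) (strict inequality, with c = 0), then there is an open neighborhood of x on which Prox_{λq}(·) is identically zero; in particular Prox_{λq} is differentiable at x with derivative equal to the zero matrix. -/
open Finset Filter

/-- With `c = 0`: if `E_L(x) < E_R(x)`, the constrained proximal map `P = Prox_{λq}` is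
identically zero on an open neighborhood of `x`; in particular it is differentiable at `x`
with zero derivative. -/
theorem stmt19 (n : ℕ) (hn : 0 < n) (μ : Fin n → ℝ) (hμ : ∀ i, μ i ≠ 0)
    (lam : ℝ) (hlam : 0 < lam) (x : Fin n → ℝ)
    (hE : (⨆ i, (x i / μ i - lam / |μ i|)) < ⨅ i, (x i / μ i + lam / |μ i|))
    (P : (Fin n → ℝ) → (Fin n → ℝ))
    (hPfeas : ∀ y : Fin n → ℝ, ∑ i, μ i * P y i = 0)
    (hPmin : ∀ y z : Fin n → ℝ, ∑ i, μ i * z i = 0 →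
      (1/2) * ∑ i, (P y i - y i)^2 + lam * ∑ i, |P y i| ≤
        (1/2) * ∑ i, (z i - y i)^2 + lam * ∑ i, |z i|) :
    (∃ U : Set (Fin n → ℝ), IsOpen U ∧ x ∈ U ∧ ∀ y ∈ U, P y = 0) ∧
    HasFDerivAt P (0 : (Fin n → ℝ) →L[ℝ] (Fin n → ℝ)) x := by
  haveI : Nonempty (Fin n) := ⟨⟨0, hn⟩⟩
  set U : Set (Fin n → ℝ) :=
    {y | ∀ i j, y i / μ i - lam / |μ i| < y j / μ j + lam / |μ j|} with hUdef
  have hUopen : IsOpen U := by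
    have hrw : U = ⋂ i, ⋂ j,
        {y : Fin n → ℝ | y i / μ i - lam / |μ i| < y j / μ j + lam / |μ j|} := by
      ext y; simp [hUdef, Set.mem_iInter]
    rw [hrw]
    exact isOpen_iInter_of_finite fun i => isOpen_iInter_of_finite fun j =>
      isOpen_lt (by fun_prop) (by fun_prop)
  have hxU : x ∈ U := by
    intro i j
    have h1 : x i / μ i - lam / |μ i| ≤ ⨆ k, (x k / μ k - lam / |μ k|) :=
      le_ciSup (f := fun k => x k / μ k - lam / |μ k|)
        (Set.Finite.bddAbove (Set.finite_range _)) i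
    have h2 : (⨅ k, (x k / μ k + lam / |μ k|)) ≤ x j / μ j + lam / |μ j| :=
      ciInf_le (f := fun k => x k / μ k + lam / |μ k|)
        (Set.Finite.bddBelow (Set.finite_range _)) j
    linarith
  have hU0 : ∀ y ∈ U, P y = 0 := by
    intro y hy
    set ν := ⨆ k, (y k / μ k - lam / |μ k|) with hν
    have h1 : ∀ i, y i / μ i - lam / |μ i| ≤ ν :=
      fun i => le_ciSup (f := fun k => y k / μ k - lam / |μ k|)
        (Set.Finite.bddAbove (Set.finite_range _)) i
    have h2 : ∀ j, ν ≤ y j / μ j + lam / |μ j| :=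
      fun j => ciSup_le fun i => (hy i j).le
    have habs : ∀ i, |y i - ν * μ i| ≤ lam := by
      intro i
      have hne : |μ i| ≠ 0 := abs_ne_zero.mpr (hμ i)
      have hpos : (0:ℝ) < |μ i| := abs_pos.mpr (hμ i)
      have hi1 : y i / μ i - ν ≤ lam / |μ i| := by have := h1 i; linarith
      have hi2 : -(lam / |μ i|) ≤ y i / μ i - ν := by have := h2 i; linarith
      have habs' : |y i / μ i - ν| ≤ lam / |μ i| := abs_le.mpr ⟨hi2, hi1⟩
      have hm : μ i ≠ 0 := hμ i
      have heq : y i - ν * μ i = μ i * (y i / μ i - ν) := by field_simp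
      calc |y i - ν * μ i| = |μ i| * |y i / μ i - ν| := by rw [heq, abs_mul]
        _ ≤ |μ i| * (lam / |μ i|) := mul_le_mul_of_nonneg_left habs' (abs_nonneg _)
        _ = lam := by field_simp
    have hsum1 : ∑ i, P y i * (y i - ν * μ i) ≤ lam * ∑ i, |P y i| := by
      rw [Finset.mul_sum]
      apply Finset.sum_le_sum
      intro i _
      calc P y i * (y i - ν * μ i) ≤ |P y i * (y i - ν * μ i)| := le_abs_self _
        _ = |P y i| * |y i - ν * μ i| := abs_mul _ _
        _ ≤ |P y i| * lam := mul_le_mul_of_nonneg_left (habs i) (abs_nonneg _)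
        _ = lam * |P y i| := mul_comm _ _
    have hsum2 : ∑ i, P y i * (y i - ν * μ i)
        = ∑ i, P y i * y i - ν * ∑ i, μ i * P y i := by
      rw [Finset.mul_sum, ← Finset.sum_sub_distrib]
      exact Finset.sum_congr rfl fun i _ => by ring
    have hsum3 : ∑ i, P y i * y i ≤ lam * ∑ i, |P y i| := by
      rw [hsum2, hPfeas y] at hsum1; linarith
    have hle := hPmin y 0 (by simp)
    simp only [Pi.zero_apply, zero_sub, neg_sq, abs_zero, Finset.sum_const_zero,
      mul_zero, add_zero] at hle
    have hexp : ∑ i, (P y i - y i)^2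
        = ∑ i, (P y i)^2 - 2 * ∑ i, P y i * y i + ∑ i, (y i)^2 := by
      rw [Finset.mul_sum, ← Finset.sum_sub_distrib, ← Finset.sum_add_distrib]
      exact Finset.sum_congr rfl fun i _ => by ring
    have hsq : ∑ i, (P y i)^2 ≤ 0 := by rw [hexp] at hle; linarith
    have hnn : ∀ i ∈ Finset.univ, (0:ℝ) ≤ (P y i)^2 := fun i _ => sq_nonneg _
    have h0 : ∑ i, (P y i)^2 = 0 := le_antisymm hsq (Finset.sum_nonneg hnn)
    funext i
    have hi := (Finset.sum_eq_zero_iff_of_nonneg hnn).mp h0 i (Finset.mem_univ i)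
    have := pow_eq_zero_iff (n := 2) (by norm_num) |>.mp hi
    simpa using this
  refine ⟨⟨U, hUopen, hxU, hU0⟩, ?_⟩
  have hev : P =ᶠ[nhds x] fun _ => (0 : Fin n → ℝ) :=
    Filter.eventuallyEq_of_mem (hUopen.mem_nhds hxU) hU0
  exact (hasFDerivAt_const (0 : Fin n → ℝ) x).congr_of_eventuallyEq hev
end
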